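/- Fix p ≥ 1 and D ≥ 1. If a compact metric space S embeds with distortion D into some ultrametric space, then S embeds with distortion D into ℓ_p. -/

import Mathlib

open ENNReal Filter Topology Set Metric

/-!
A bi-Lipschitz map sends the compact space `S` onto a compact ultrametric space `f(S)`, so it
suffices to embed `f(S)` isometrically into `ℓ_p`. By compactness, the distances `≥ ε` in `f(S)`
take finitely many values, so all nonzero distances lie in a strictly decreasing null sequence
`t`. Being at distance `< t k` is an equivalence relation whose classes (balls) are labelled by
`σ k : f(S) → ℕ`. Send `x` to the vector with entry `((t k ^ p - t (k + 1) ^ p) / 2) ^ (1 / p)`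
at `(k, σ k x)` and `0` elsewhere: if `dist x y = t m`, the labels of `x` and `y` differ exactly
at the levels `k ≥ m`, so the `p`-th power of the `ℓ_p` distance telescopes to `t m ^ p`.
-/

namespace IsUltrametricDist

variable {X : Type*} [PseudoMetricSpace X] [IsUltrametricDist X]

lemma dist_eq_of_dist_lt {x y z : X} (h : dist x y < dist x z) : dist y z = dist x z := by
  rw [dist_eq_max_of_dist_ne_dist y x z (by rw [dist_comm]; exact h.ne), dist_comm y x,
    max_eq_right h.le]

lemma finite_range_dist_inter_Ici [CompactSpace X] {ε : ℝ} (hε : 0 < ε) :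
    ((range fun q : X × X => dist q.1 q.2) ∩ Ici ε).Finite := by
  obtain ⟨C, -, hC, hcover⟩ := finite_cover_balls_of_compact (isCompact_univ (X := X)) hε
  refine ((hC.prod hC).image fun q : X × X => dist q.1 q.2).subset ?_
  rintro _ ⟨⟨⟨x, y⟩, rfl⟩, hxy : ε ≤ dist x y⟩
  obtain ⟨c, hc, hxc⟩ := mem_iUnion₂.1 (hcover (mem_univ x))
  obtain ⟨c', hc', hyc⟩ := mem_iUnion₂.1 (hcover (mem_univ y))
  have hx : dist c y = dist x y := dist_eq_of_dist_lt ((mem_ball.1 hxc).trans_le hxy)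
  have hy : dist c' c = dist y c := by
    refine dist_eq_of_dist_lt ?_
    rw [dist_comm y c, hx]
    exact (mem_ball.1 hyc).trans_le hxy
  exact ⟨(c, c'), ⟨hc, hc'⟩, show dist c c' = dist x y by rw [dist_comm, hy, dist_comm, hx]⟩

lemma exists_nat_eq_iff_dist_lt [TopologicalSpace.SeparableSpace X] {r : ℝ} (hr : 0 < r) :
    ∃ σ : X → ℕ, ∀ x y, σ x = σ y ↔ dist x y < r := by
  rcases isEmpty_or_nonempty X with hX | hX
  · exact ⟨isEmptyElim, isEmptyElim⟩
  classical
  let z := TopologicalSpace.denseSeq X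
  have hz : ∀ x, ∃ n, dist (z n) x < r := fun x =>
    (denseRange_iff.1 (TopologicalSpace.denseRange_denseSeq X) x r hr).imp
      fun _ h => by rwa [dist_comm]
  refine ⟨fun x => Nat.find (hz x), fun x y => ⟨fun hxy => ?_, fun hxy => ?_⟩⟩
  · have hx := Nat.find_spec (hz x)
    have hy := Nat.find_spec (hz y)
    simp only at hxy
    rw [hxy] at hx
    exact (dist_triangle_max x _ y).trans_lt (max_lt (by rwa [dist_comm]) hy)
  · have hball : ball x r = ball y r := ball_eq_of_mem (by rwa [mem_ball'])
    exact Nat.find_congr' fun {n} => by rw [← mem_ball, hball, mem_ball]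

end IsUltrametricDist

lemma hasSum_sub_succ_of_antitone {u : ℕ → ℝ} {l : ℝ} (hu : Antitone u)
    (hlim : Tendsto u atTop (𝓝 l)) : HasSum (fun k => u k - u (k + 1)) (u 0 - l) := by
  rw [hasSum_iff_tendsto_nat_of_nonneg (fun k => sub_nonneg.2 (hu k.le_succ))]
  simp_rw [Finset.sum_range_sub']
  exact tendsto_const_nhds.sub hlim

lemma hasSum_ite_lt_sub_succ_of_antitone {u : ℕ → ℝ} (hu : Antitone u)
    (hlim : Tendsto u atTop (𝓝 0)) (m : ℕ) :
    HasSum (fun k => if k < m then 0 else u k - u (k + 1)) (u m) := by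
  rw [← hasSum_nat_add_iff' m]
  simpa [Finset.sum_ite_of_true, add_right_comm _ m 1] using
    hasSum_sub_succ_of_antitone (fun a b hab => hu (Nat.add_le_add_right hab m))
      ((tendsto_add_atTop_iff_nat m).2 hlim)

lemma hasSum_prod_of_nonneg {α β : Type*} {f : α × β → ℝ} (hf : 0 ≤ f) {g : α → ℝ} {a : ℝ}
    (hfib : ∀ x, HasSum (fun y => f (x, y)) (g x)) (hg : HasSum g a) : HasSum f a := by
  have hs : Summable f := (summable_prod_of_nonneg hf).2
    ⟨fun x => (hfib x).summable, by simpa only [(hfib _).tsum_eq] using hg.summable⟩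
  exact (hs.hasSum.prod_fiberwise hfib).unique hg ▸ hs.hasSum

section Indicator

variable {β : Type*} [DecidableEq β] {p : ℝ}

lemma hasSum_abs_ite_rpow (hp : 0 < p) (i : β) (c : ℝ) :
    HasSum (fun n => |if n = i then c else 0| ^ p) (|c| ^ p) := by
  convert hasSum_ite_eq i (|c| ^ p) using 2 with n
  split_ifs <;> simp [hp.ne']

lemma hasSum_abs_ite_sub_ite_rpow (hp : 0 < p) (i j : β) (c : ℝ) :
    HasSum (fun n => |(if n = i then c else 0) - (if n = j then c else 0)| ^ p)
      (if i = j then 0 else 2 * |c| ^ p) := by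
  split_ifs with hij
  · simp [hij, hp.ne', hasSum_zero]
  · convert (hasSum_ite_eq i (|c| ^ p)).add (hasSum_ite_eq j (|c| ^ p)) using 2 with n
    · split_ifs <;> simp_all [hp.ne']
    · ring

end Indicator
lemma exists_isGreatest_inter_Iio {α : Type*} [LinearOrder α] {F : Set α} {a e : α}
    (he : e ∈ F ∩ Iio a) (hfin : (F ∩ Ici e).Finite) : ∃ b, IsGreatest (F ∩ Iio a) b := by
  obtain ⟨b, ⟨hb, heb⟩, hmax⟩ := exists_max_image (F ∩ Iio a ∩ Ici e) id
    (hfin.subset fun x hx => ⟨hx.1.1, hx.2⟩) ⟨e, he, mem_Ici.2 le_rfl⟩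
  refine ⟨b, hb, fun x hx => ?_⟩
  rcases le_or_gt e x with hex | hxe
  exacts [hmax x ⟨hx, hex⟩, hxe.le.trans heb]

lemma strictAnti_tendsto_zero_of_isGreatest {F : Set ℝ} (hpos : ∀ e ∈ F, 0 < e)
    (hfin : ∀ ε > 0, (F ∩ Ici ε).Finite) {s : ℕ → ℝ}
    (hs : ∀ k, IsGreatest (F ∩ Iio (s k)) (s (k + 1))) :
    StrictAnti (fun k => s (k + 1)) ∧ Tendsto (fun k => s (k + 1)) atTop (𝓝 0) ∧
      F ∩ Iio (s 0) ⊆ range fun k => s (k + 1) := by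
  have hanti : StrictAnti fun k => s (k + 1) :=
    strictAnti_nat_of_succ_lt fun k => (hs (k + 1)).1.2
  -- an injective sequence cannot stay in the finite set `F ∩ Ici ε`
  have hsmall : ∀ ε > 0, ∃ k, s (k + 1) < ε := by
    intro ε hε
    by_contra! h
    exact infinite_range_of_injective hanti.injective
      ((hfin ε hε).subset (range_subset_iff.2 fun k => ⟨(hs k).1.1, h k⟩))
  refine ⟨hanti, tendsto_order.2 ⟨fun a ha => ?_, fun a ha => ?_⟩, fun e ⟨he, he0⟩ => ?_⟩
  · exact Eventually.of_forall fun k => ha.trans (hpos _ (hs k).1.1)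
  · obtain ⟨N, hN⟩ := hsmall a ha
    exact eventually_atTop.2 ⟨N, fun k hk => (hanti.antitone hk).trans_lt hN⟩
  · by_contra hne
    have hlt : ∀ k, e < s k := by
      intro k
      induction k with
      | zero => exact he0
      | succ k ih => exact ((hs k).2 ⟨he, ih⟩).lt_of_ne fun h => hne ⟨k, h.symm⟩
    obtain ⟨k, hk⟩ := hsmall e (hpos e he)
    exact (hlt (k + 1)).not_gt hk

lemma exists_strictAnti_tendsto_zero_subset_range {E : Set ℝ} (hpos : ∀ e ∈ E, 0 < e)
    (hfin : ∀ ε > 0, (E ∩ Ici ε).Finite) :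
    ∃ t : ℕ → ℝ, StrictAnti t ∧ Tendsto t atTop (𝓝 0) ∧ E ⊆ range t := by
  have hgeom : Tendsto (fun n : ℕ => (2⁻¹ : ℝ) ^ n) atTop (𝓝 0) :=
    tendsto_pow_atTop_nhds_zero_of_lt_one (by norm_num) (by norm_num)
  -- adding the powers of `1/2` makes every `F ∩ Iio a` with `a > 0` nonempty
  set F := E ∪ range fun n : ℕ => (2⁻¹ : ℝ) ^ n
  have hFpos : ∀ e ∈ F, 0 < e := by
    rintro e (he | ⟨n, rfl⟩)
    exacts [hpos e he, by positivity]
  have hFfin : ∀ ε > 0, (F ∩ Ici ε).Finite := by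
    intro ε hε
    refine union_inter_distrib_right .. ▸ (hfin ε hε).union ?_
    have : {n | ¬ (2⁻¹ : ℝ) ^ n < ε}.Finite := by
      simpa [← Nat.cofinite_eq_atTop] using hgeom.eventually (eventually_lt_nhds hε)
    refine (this.image fun n : ℕ => (2⁻¹ : ℝ) ^ n).subset ?_
    rintro _ ⟨⟨n, rfl⟩, hn⟩
    exact ⟨n, not_lt.2 hn, rfl⟩
  have hnext : ∀ a > 0, ∃ b, IsGreatest (F ∩ Iio a) b := fun a ha =>
    let ⟨n, hn⟩ := (hgeom.eventually (eventually_lt_nhds ha)).exists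
    exists_isGreatest_inter_Iio ⟨Or.inr ⟨n, rfl⟩, hn⟩ (hFfin _ (by positivity))
  choose! next hnext using hnext
  obtain ⟨B, hB⟩ : BddAbove F := ((hFfin 1 one_pos).bddAbove.union bddAbove_Iio).mono
    fun e he => (le_or_gt 1 e).imp (fun h => ⟨he, h⟩) id
  set s : ℕ → ℝ := fun k => next^[k] (B + 1)
  have hs_succ : ∀ k, s (k + 1) = next (s k) := fun k => Function.iterate_succ_apply' ..
  have hs_pos : ∀ k, 0 < s k := by
    intro k
    induction k with
    | zero =>
      have h1 : (1 : ℝ) ∈ F := Or.inr ⟨0, pow_zero _⟩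
      linarith [show s 0 = B + 1 from rfl, hB h1]
    | succ k ih => exact hs_succ k ▸ hFpos _ (hnext _ ih).1.1
  obtain ⟨hanti, hlim, hrange⟩ := strictAnti_tendsto_zero_of_isGreatest hFpos hFfin
    fun k => hs_succ k ▸ hnext _ (hs_pos k)
  exact ⟨_, hanti, hlim, fun e he =>
    hrange ⟨Or.inl he, (hB (Or.inl he)).trans_lt (lt_add_one B)⟩⟩

section BallCoords

variable {X : Type*} {p : ℝ} {t : ℕ → ℝ} {σ : ℕ → X → ℕ}

variable (p t) in
noncomputable def ballWeight (k : ℕ) : ℝ := ((t k ^ p - t (k + 1) ^ p) / 2) ^ p⁻¹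

variable (p t σ) in
noncomputable def ballCoords (x : X) (kn : ℕ × ℕ) : ℝ :=
  if kn.2 = σ kn.1 x then ballWeight p t kn.1 else 0

lemma abs_ballWeight_rpow (hp : 0 < p) (ht : Antitone t) (hlim : Tendsto t atTop (𝓝 0))
    (k : ℕ) : |ballWeight p t k| ^ p = (t k ^ p - t (k + 1) ^ p) / 2 := by
  have hw : 0 ≤ (t k ^ p - t (k + 1) ^ p) / 2 := by
    have := Real.rpow_le_rpow (ht.le_of_tendsto hlim (k + 1)) (ht k.le_succ) hp.le
    linarith
  rw [ballWeight, abs_of_nonneg (by positivity), Real.rpow_inv_rpow hw hp.ne']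

lemma tendsto_rpow_of_tendsto_zero (hp : 0 < p) (hlim : Tendsto t atTop (𝓝 0)) :
    Tendsto (fun k => t k ^ p) atTop (𝓝 0) := by
  simpa [hp.ne'] using hlim.rpow_const (Or.inr hp.le)

lemma antitone_rpow_of_tendsto_zero (hp : 0 < p) (ht : Antitone t)
    (hlim : Tendsto t atTop (𝓝 0)) : Antitone fun k => t k ^ p := fun _ b h =>
  Real.rpow_le_rpow (ht.le_of_tendsto hlim b) (ht h) hp.le

lemma hasSum_abs_ballCoords_rpow (hp : 0 < p) (ht : Antitone t) (hlim : Tendsto t atTop (𝓝 0))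
    (x : X) : HasSum (fun kn => |ballCoords p t σ x kn| ^ p) (t 0 ^ p / 2) := by
  refine hasSum_prod_of_nonneg (fun _ => by positivity)
    (fun k => hasSum_abs_ite_rpow hp (σ k x) (ballWeight p t k)) ?_
  simp only [abs_ballWeight_rpow hp ht hlim]
  simpa using (hasSum_sub_succ_of_antitone (antitone_rpow_of_tendsto_zero hp ht hlim)
    (tendsto_rpow_of_tendsto_zero hp hlim)).div_const 2

lemma hasSum_abs_ballCoords_sub_rpow [MetricSpace X] (hp : 0 < p) (ht : StrictAnti t)
    (hlim : Tendsto t atTop (𝓝 0)) (hσ : ∀ k x y, σ k x = σ k y ↔ dist x y < t k)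
    (hdist : ∀ x y : X, x ≠ y → dist x y ∈ range t) (x y : X) :
    HasSum (fun kn => |ballCoords p t σ x kn - ballCoords p t σ y kn| ^ p) (dist x y ^ p) := by
  rcases eq_or_ne x y with rfl | hxy
  · simp [hp.ne', hasSum_zero]
  obtain ⟨m, hm⟩ := hdist x y hxy
  rw [← hm]
  refine hasSum_prod_of_nonneg (fun _ => by positivity)
    (fun k => hasSum_abs_ite_sub_ite_rpow hp (σ k x) (σ k y) (ballWeight p t k)) ?_
  convert hasSum_ite_lt_sub_succ_of_antitone
    (antitone_rpow_of_tendsto_zero hp ht.antitone hlim) (tendsto_rpow_of_tendsto_zero hp hlim) m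
    using 2 with k
  have hlabel : σ k x = σ k y ↔ k < m := by rw [hσ, ← hm, ht.lt_iff_gt]
  simp only [hlabel, abs_ballWeight_rpow hp ht.antitone hlim]
  split_ifs <;> ring

end BallCoords

lemma exists_isometry_lp_of_hasSum {ι X : Type*} [PseudoMetricSpace X] {p : ℝ≥0∞}
    [Fact (1 ≤ p)] (hp : p ≠ ∞) (F : X → ι → ℝ) (hF : ∀ x, Summable fun i => |F x i| ^ p.toReal)
    (hdist : ∀ x y, HasSum (fun i => |F x i - F y i| ^ p.toReal) (dist x y ^ p.toReal)) :
    ∃ g : X → lp (fun _ : ι => ℝ) p, Isometry g := by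
  have hp0 : 0 < p.toReal := ENNReal.toReal_pos (one_pos.trans_le Fact.out).ne' hp
  refine ⟨fun x => ⟨F x, memℓp_gen (by simpa only [Real.norm_eq_abs] using hF x)⟩,
    Isometry.of_dist_eq fun x y => ?_⟩
  rw [dist_eq_norm, ← Real.rpow_left_inj (norm_nonneg _) dist_nonneg hp0.ne',
    lp.norm_rpow_eq_tsum hp0]
  exact (hdist x y).tsum_eq

theorem IsUltrametricDist.exists_isometry_lp {X : Type*} [MetricSpace X] [IsUltrametricDist X]
    [CompactSpace X] (p : ℝ≥0∞) [Fact (1 ≤ p)] (hp : p ≠ ∞) :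
    ∃ g : X → lp (fun _ : ℕ => ℝ) p, Isometry g := by
  obtain ⟨t, ht, hlim, hrange⟩ := exists_strictAnti_tendsto_zero_subset_range
    (E := (range fun q : X × X => dist q.1 q.2) ∩ Ioi 0) (fun _ h => h.2)
    (fun ε hε => (finite_range_dist_inter_Ici hε).subset fun _ h => ⟨h.1.1, h.2⟩)
  have ht0 : ∀ k, 0 < t k := fun k =>
    (ht.antitone.le_of_tendsto hlim (k + 1)).trans_lt (ht k.lt_succ_self)
  choose σ hσ using fun k => exists_nat_eq_iff_dist_lt (X := X) (ht0 k)
  have hp0 : 0 < p.toReal := ENNReal.toReal_pos (one_pos.trans_le Fact.out).ne' hp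
  have hdist : ∀ x y : X, x ≠ y → dist x y ∈ range t := fun x y hxy =>
    hrange ⟨mem_range_self (x, y), dist_pos.2 hxy⟩
  refine exists_isometry_lp_of_hasSum hp
    (fun x i => ballCoords p.toReal t σ x (Nat.pairEquiv.symm i)) (fun x => ?_) (fun x y => ?_)
  · exact (Nat.pairEquiv.symm.hasSum_iff.2
      (hasSum_abs_ballCoords_rpow (σ := σ) hp0 ht.antitone hlim x)).summable
  · exact (Nat.pairEquiv.symm.hasSum_iff.2
      (hasSum_abs_ballCoords_sub_rpow hp0 ht hlim hσ hdist x y) :)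

theorem embeds_distortion_ultrametric_implies_embeds_distortion_lp_general
    (p : ℝ) (hp : 1 ≤ p) (D : ℝ)
    (S : Type*) [MetricSpace S] [CompactSpace S]
    (h : ∃ (U : Type) (_ : MetricSpace U) (_ : IsUltrametricDist U)
      (f : S → U) (r : ℝ), 0 < r ∧ ∀ x y : S,
        r * dist x y ≤ dist (f x) (f y) ∧ dist (f x) (f y) ≤ D * r * dist x y) :
    haveI : Fact ((1 : ℝ≥0∞) ≤ ENNReal.ofReal p) := ⟨ENNReal.one_le_ofReal.mpr hp⟩
    ∃ (f : S → lp (fun _ : ℕ => ℝ) (ENNReal.ofReal p)) (r : ℝ), 0 < r ∧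
      ∀ x y : S,
        r * dist x y ≤ dist (f x) (f y) ∧ dist (f x) (f y) ≤ D * r * dist x y := by
  have : Fact ((1 : ℝ≥0∞) ≤ ENNReal.ofReal p) := ⟨ENNReal.one_le_ofReal.mpr hp⟩
  obtain ⟨U, _, _, f, r, hr, hf⟩ := h
  have hcont : Continuous f := (LipschitzWith.of_dist_le' fun x y => (hf x y).2).continuous
  have : CompactSpace (range f) := isCompact_iff_compactSpace.1 (isCompact_range hcont)
  obtain ⟨g, hg⟩ := IsUltrametricDist.exists_isometry_lp (X := range f) (ENNReal.ofReal p)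
    ENNReal.ofReal_ne_top
  exact ⟨g ∘ rangeFactorization f, r, hr, fun x y => by
    simpa only [Function.comp_apply, hg.dist_eq, Subtype.dist_eq, rangeFactorization_coe]
      using hf x y⟩

/-- For `p ≥ 1` and `D ≥ 1`: if a compact metric space `S` embeds with distortion `D`
into some ultrametric space, then `S` embeds with distortion `D` into `ℓ_p`. -/
theorem embeds_distortion_ultrametric_implies_embeds_distortion_lp
    (p : ℝ) (hp : 1 ≤ p) (D : ℝ) (hD : 1 ≤ D)
    (S : Type*) [MetricSpace S] [CompactSpace S]
    (h : ∃ (U : Type) (_ : MetricSpace U) (_ : IsUltrametricDist U)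
      (f : S → U) (r : ℝ), 0 < r ∧ ∀ x y : S,
        r * dist x y ≤ dist (f x) (f y) ∧ dist (f x) (f y) ≤ D * r * dist x y) :
    haveI : Fact ((1 : ℝ≥0∞) ≤ ENNReal.ofReal p) := ⟨ENNReal.one_le_ofReal.mpr hp⟩
    ∃ (f : S → lp (fun _ : ℕ => ℝ) (ENNReal.ofReal p)) (r : ℝ), 0 < r ∧
      ∀ x y : S,
        r * dist x y ≤ dist (f x) (f y) ∧ dist (f x) (f y) ≤ D * r * dist x y :=
  embeds_distortion_ultrametric_implies_embeds_distortion_lp_general p hp D S h
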